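/- For every integer n ≥ 6, o_e(n) = s_e(n), where o_e(n) is the number of partitions of n into odd parts q_1 ≥ q_2 ≥ ⋯ ≥ q_r, every part odd and at least 3, with r ≥ 4, q_2 = q_3, smallest part q_r = 3, and either q_3 > q_4 or q_2 = q_3 = q_4 = 3, subject to the following merging-cap conditions: writing 2t = q_1 − q_2 (so q_1 − q_2 is even), u(q) for the number of indices 4 ≤ i ≤ r with q_i = q (for each odd q ≥ 5), and v for the number of indices 4 ≤ i ≤ r−1 with q_i = 3, one requires (i) if t > 0 then 2·2^{⌊log₂ t⌋} ≤ q_3 − 1, (ii) for every odd q ≥ 5 with u(q) > 0, q·2^{⌊log₂ u(q)⌋} ≤ q_3 − 1, and (iii) if v > 0 then 3·2^{⌊log₂ v⌋} ≤ q_3 − 1 (here 2^{⌊log₂ m⌋} is the largest power of two not exceeding m). -/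

import Mathlib

/-!
An OE partition `q₁, c, c, q₄, …, q_{r-1}, 3` is determined by `c` and the multiset `M` of odd
parts consisting of `q₁ - c` ones (an even number) together with `q₄, …, q_{r-1}`, and its three
merging caps become one condition: `o · 2^⌊log₂ m⌋ < c` for every part `o` of `M` of
multiplicity `m`. A butterfly partition with `p₂` even is `c + 2, c + 1, c` followed by a set `S`
of distinct parts in `[2, c)`, with `c` odd. Glaisher's bijection, which writes the multiplicity
of each odd `o` in binary and merges `2^a` copies of `o` into the single part `2^a · o`, maps `M`
to `S`. The largest part it builds from `o` is `o · 2^⌊log₂ m⌋`, so the caps say exactly that all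
parts of `S` are below `c`; and `1 ∉ S` exactly when the number of ones is even.
-/

/-- A butterfly partition of `n`, written as its strictly decreasing list of parts
`p₁ > p₂ > ⋯ > p_k`: at least three parts, `p₁ = p₂ + 1 = p₃ + 2`, smallest part `≥ 2`. -/
def IsButterfly (n : ℤ) (l : List ℕ) : Prop :=
  l.Pairwise (· > ·) ∧ 3 ≤ l.length ∧
    l.getD 0 0 = l.getD 1 0 + 1 ∧ l.getD 0 0 = l.getD 2 0 + 2 ∧
    (∀ x ∈ l, 2 ≤ x) ∧ (l.sum : ℤ) = n

/-- Number of butterfly partitions of `n` whose second largest part is even. -/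
noncomputable def sE (n : ℤ) : ℤ :=
  Nat.card {l : List ℕ // IsButterfly n l ∧ Even (l.getD 1 0)}

/-- A partition of `n`, written as its weakly decreasing list of parts
`q₁ ≥ q₂ ≥ ⋯ ≥ q_r`, all parts odd and at least `3`, with `r ≥ 4`, `q₂ = q₃`,
smallest part `q_r = 3`, and either `q₃ > q₄` or `q₂ = q₃ = q₄ = 3`, subject to the
merging-cap conditions (i), (ii), (iii): here `t = (q₁ - q₂)/2`, `u(qv)` is the
number of indices `4 ≤ i ≤ r` with `q_i = qv`, and `v` is the number of indices
`4 ≤ i ≤ r - 1` with `q_i = 3`, and `2 ^ (Nat.log 2 m)` is the largest power of two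
not exceeding `m` (for `m ≥ 1`). -/
def IsOE (n : ℤ) (l : List ℕ) : Prop :=
  l.Pairwise (· ≥ ·) ∧ 4 ≤ l.length ∧
    (∀ x ∈ l, Odd x ∧ 3 ≤ x) ∧
    l.getD 1 0 = l.getD 2 0 ∧
    l.getD (l.length - 1) 0 = 3 ∧
    (l.getD 3 0 < l.getD 2 0 ∨
      (l.getD 1 0 = 3 ∧ l.getD 2 0 = 3 ∧ l.getD 3 0 = 3)) ∧
    -- (i): with `t = (q₁ - q₂)/2`, if `t > 0` then `2 · 2^⌊log₂ t⌋ ≤ q₃ - 1`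
    (0 < (l.getD 0 0 - l.getD 1 0) / 2 →
      2 * 2 ^ Nat.log 2 ((l.getD 0 0 - l.getD 1 0) / 2) ≤ l.getD 2 0 - 1) ∧
    -- (ii): for every odd `qv ≥ 5` with `u(qv) > 0`, `qv · 2^⌊log₂ u(qv)⌋ ≤ q₃ - 1`
    (∀ qv : ℕ, Odd qv → 5 ≤ qv → 0 < (l.drop 3).count qv →
      qv * 2 ^ Nat.log 2 ((l.drop 3).count qv) ≤ l.getD 2 0 - 1) ∧
    -- (iii): if `v > 0` then `3 · 2^⌊log₂ v⌋ ≤ q₃ - 1`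
    (0 < ((l.drop 3).dropLast).count 3 →
      3 * 2 ^ Nat.log 2 (((l.drop 3).dropLast).count 3) ≤ l.getD 2 0 - 1) ∧
    (l.sum : ℤ) = n

open Finset

namespace Nat

lemma le_log_of_mem_bitIndices {a k : ℕ} (ha : a ∈ k.bitIndices) : a ≤ log 2 k :=
  le_log_of_pow_le one_lt_two (two_pow_le_of_mem_bitIndices ha)

lemma log_mem_bitIndices {k : ℕ} (hk : k ≠ 0) : log 2 k ∈ k.bitIndices := by
  rw [mem_bitIndices, ← log2_eq_log_two]
  exact testBit_log2 hk

lemma factorization_two_pow_mul {a o : ℕ} (ho : Odd o) : (2 ^ a * o).factorization 2 = a := by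
  rw [factorization_mul (by positivity) ho.pos.ne', Finsupp.add_apply,
    factorization_pow_self prime_two, factorization_eq_zero_of_not_dvd ho.not_two_dvd_nat,
    add_zero]

lemma ordCompl_two_pow_mul {a o : ℕ} (ho : Odd o) : ordCompl[2] (2 ^ a * o) = o := by
  rw [ordCompl_self_pow_mul o a prime_two,
    (ordCompl_eq_self_iff_zero_or_not_dvd o prime_two).2 (Or.inr ho.not_two_dvd_nat)]

lemma odd_ordCompl_two {s : ℕ} (hs : s ≠ 0) : Odd (ordCompl[2] s) :=
  odd_iff.2 (two_dvd_ne_zero.1 (not_dvd_ordCompl prime_two hs))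

lemma mem_bitIndices_sum_two_pow {a : ℕ} {E : Finset ℕ} :
    a ∈ (∑ i ∈ E, 2 ^ i).bitIndices ↔ a ∈ E := by
  rw [← List.mem_toFinset, toFinset_bitIndices_sum_two_pow]

lemma two_pow_log_two_mul {t : ℕ} (ht : t ≠ 0) : 2 ^ log 2 (2 * t) = 2 * 2 ^ log 2 t := by
  rw [mul_comm 2 t, log_mul_base one_lt_two ht, pow_succ, mul_comm]

end Nat

lemma Finset.sum_sort {α : Type*} [AddCommMonoid α] (r : α → α → Prop) [DecidableRel r]
    [IsTrans α r] [Std.Antisymm r] [Std.Total r] (s : Finset α) :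
    (s.sort r).sum = ∑ a ∈ s, a := by
  rw [← Multiset.sum_coe, Finset.sort_eq, Finset.sum_eq_multiset_sum, Multiset.map_id']

lemma Multiset.replicate_count_add_filter_ne {α : Type*} [DecidableEq α] (M : Multiset α)
    (a : α) :
    replicate (M.count a) a + M.filter (· ≠ a) = M := by
  rw [← filter_eq', filter_add_not]

lemma Multiset.forall_mem_replicate_add_iff {α : Type*} [DecidableEq α] {k : ℕ} {a : α}
    {M : Multiset α} (ha : a ∉ M) (P : α → ℕ → Prop) :
    (∀ o ∈ replicate k a + M, P o ((replicate k a + M).count o)) ↔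
      (k ≠ 0 → P a k) ∧ ∀ o ∈ M, P o (M.count o) := by
  have hcount : ∀ o ∈ M, (replicate k a + M).count o = M.count o := fun o ho ↦ by
    rw [count_add, count_replicate, if_neg (ne_of_mem_of_not_mem ho ha).symm, zero_add]
  have hcount_a : (replicate k a + M).count a = k := by
    rw [count_add, count_replicate_self, count_eq_zero.2 ha, add_zero]
  constructor
  · intro h
    refine ⟨fun hk ↦ ?_, fun o ho ↦ ?_⟩
    · rw [← hcount_a]
      exact h a (mem_add.2 (Or.inl (mem_replicate.2 ⟨hk, rfl⟩)))
    · rw [← hcount o ho]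
      exact h o (mem_add.2 (Or.inr ho))
  · rintro ⟨h_a, hM⟩ o ho
    rcases mem_add.1 ho with ho | ho
    · obtain ⟨hk, rfl⟩ := mem_replicate.1 ho
      rw [hcount_a]
      exact h_a hk
    · rw [hcount o ho]
      exact hM o ho

noncomputable def glaisherSplit (S : Finset ℕ) : Multiset ℕ :=
  ∑ s ∈ S, Multiset.replicate (ordProj[2] s) (ordCompl[2] s)

def glaisherMerge (M : Multiset ℕ) : Finset ℕ :=
  M.toFinset.biUnion fun o ↦ (M.count o).bitIndices.toFinset.image (2 ^ · * o)

section Glaisher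

variable {M : Multiset ℕ}

lemma count_glaisherSplit (S : Finset ℕ) (o : ℕ) :
    (glaisherSplit S).count o =
      ∑ a ∈ {s ∈ S | ordCompl[2] s = o}.image (·.factorization 2), 2 ^ a := by
  rw [glaisherSplit, Multiset.count_sum', sum_image]
  · simp only [Multiset.count_replicate, sum_ite, sum_const_zero, add_zero]
  · intro s hs t ht (hst : s.factorization 2 = t.factorization 2)
    rw [mem_coe, mem_filter] at hs ht
    rw [← Nat.ordProj_mul_ordCompl_eq_self s 2, ← Nat.ordProj_mul_ordCompl_eq_self t 2, hs.2, ht.2,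
      hst]

lemma odd_of_mem_glaisherSplit {S : Finset ℕ} (h0 : 0 ∉ S) {o : ℕ} (ho : o ∈ glaisherSplit S) :
    Odd o := by
  simp only [glaisherSplit, Multiset.mem_sum, Multiset.mem_replicate] at ho
  obtain ⟨s, hs, -, rfl⟩ := ho
  exact Nat.odd_ordCompl_two (ne_of_mem_of_not_mem hs h0)

lemma sum_glaisherSplit (S : Finset ℕ) : (glaisherSplit S).sum = ∑ s ∈ S, s := by
  rw [glaisherSplit, ← Multiset.coe_sumAddMonoidHom, map_sum]
  simp only [Multiset.coe_sumAddMonoidHom, Multiset.sum_replicate, smul_eq_mul,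
    Nat.ordProj_mul_ordCompl_eq_self]

lemma mem_of_mem_bitIndices_count {o a : ℕ} (ha : a ∈ (M.count o).bitIndices) : o ∈ M := by
  rw [← Multiset.count_ne_zero]
  rintro h
  simp [h] at ha

lemma mem_glaisherMerge {s : ℕ} :
    s ∈ glaisherMerge M ↔ ∃ o, ∃ a ∈ (M.count o).bitIndices, 2 ^ a * o = s := by
  simp only [glaisherMerge, mem_biUnion, Multiset.mem_toFinset, mem_image, List.mem_toFinset]
  exact ⟨fun ⟨o, _, h⟩ ↦ ⟨o, h⟩, fun ⟨o, a, ha, h⟩ ↦ ⟨o, mem_of_mem_bitIndices_count ha, a, ha, h⟩⟩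

lemma glaisherMerge_glaisherSplit (S : Finset ℕ) : glaisherMerge (glaisherSplit S) = S := by
  ext s
  simp only [mem_glaisherMerge, count_glaisherSplit, Nat.mem_bitIndices_sum_two_pow, mem_image,
    mem_filter]
  constructor
  · rintro ⟨o, a, ⟨t, ⟨ht, rfl⟩, rfl⟩, rfl⟩
    rwa [Nat.ordProj_mul_ordCompl_eq_self]
  · intro hs
    exact ⟨_, _, ⟨s, ⟨hs, rfl⟩, rfl⟩, Nat.ordProj_mul_ordCompl_eq_self s 2⟩

lemma glaisherSplit_glaisherMerge (hM : ∀ o ∈ M, Odd o) : glaisherSplit (glaisherMerge M) = M := by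
  ext o
  suffices {s ∈ glaisherMerge M | ordCompl[2] s = o}.image (·.factorization 2) =
      (M.count o).bitIndices.toFinset by
    rw [count_glaisherSplit, this, sum_toFinset_bitIndices_two_pow]
  ext a
  simp only [mem_image, mem_filter, mem_glaisherMerge, List.mem_toFinset]
  constructor
  · rintro ⟨_, ⟨⟨o', b, hb, rfl⟩, rfl⟩, rfl⟩
    have ho' := hM o' (mem_of_mem_bitIndices_count hb)
    rwa [Nat.ordCompl_two_pow_mul ho', Nat.factorization_two_pow_mul ho']
  · intro ha
    have ho := hM o (mem_of_mem_bitIndices_count ha)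
    exact ⟨2 ^ a * o, ⟨⟨o, a, ha, rfl⟩, Nat.ordCompl_two_pow_mul ho⟩,
      Nat.factorization_two_pow_mul ho⟩

lemma one_mem_glaisherMerge_iff : 1 ∈ glaisherMerge M ↔ Odd (M.count 1) := by
  simp [mem_glaisherMerge, mul_eq_one, Nat.odd_iff]

lemma zero_notMem_glaisherMerge (h0 : 0 ∉ M) : 0 ∉ glaisherMerge M := by
  rw [mem_glaisherMerge]
  rintro ⟨o, a, ha, h⟩
  obtain rfl : o = 0 := by simpa using h
  exact h0 (mem_of_mem_bitIndices_count ha)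

lemma forall_mem_glaisherMerge_lt_iff {m : ℕ} :
    (∀ s ∈ glaisherMerge M, s < m) ↔ ∀ o ∈ M, o * 2 ^ Nat.log 2 (M.count o) < m := by
  simp only [mem_glaisherMerge, forall_exists_index, and_imp]
  constructor
  · intro h o ho
    rw [mul_comm]
    exact h _ o _ (Nat.log_mem_bitIndices (Multiset.count_ne_zero.2 ho)) rfl
  · rintro h _ o a ha rfl
    calc 2 ^ a * o ≤ o * 2 ^ Nat.log 2 (M.count o) := by
          rw [mul_comm]; gcongr; exacts [one_le_two, Nat.le_log_of_mem_bitIndices ha]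
      _ < m := h o (mem_of_mem_bitIndices_count ha)

lemma sum_glaisherMerge (hM : ∀ o ∈ M, Odd o) : ∑ s ∈ glaisherMerge M, s = M.sum := by
  rw [← sum_glaisherSplit, glaisherSplit_glaisherMerge hM]

end Glaisher

def IsCappedOddParts (n : ℤ) (c : ℕ) (M : Multiset ℕ) : Prop :=
  Odd c ∧ 3 ≤ c ∧ (∀ o ∈ M, Odd o) ∧ Even (M.count 1) ∧
    (∀ o ∈ M, o * 2 ^ Nat.log 2 (M.count o) < c) ∧ ((3 * c + 3 + M.sum : ℕ) : ℤ) = n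

def IsCappedDistinctParts (n : ℤ) (c : ℕ) (S : Finset ℕ) : Prop :=
  Odd c ∧ 3 ≤ c ∧ (∀ s ∈ S, 2 ≤ s ∧ s < c) ∧ ((3 * c + 3 + ∑ s ∈ S, s : ℕ) : ℤ) = n

lemma bijOn_glaisherMerge (n : ℤ) :
    Set.BijOn (Prod.map id glaisherMerge) {d | IsCappedOddParts n d.1 d.2}
      {d | IsCappedDistinctParts n d.1 d.2} := by
  refine Set.InvOn.bijOn (f' := Prod.map id glaisherSplit) ⟨?_, ?_⟩ ?_ ?_
  · rintro ⟨c, M⟩ ⟨-, -, hM, -⟩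
    simp [glaisherSplit_glaisherMerge hM]
  · rintro ⟨c, S⟩ -
    simp [glaisherMerge_glaisherSplit]
  · rintro ⟨c, M⟩ ⟨hc, hc3, hM, heven, hcap, hsum⟩
    show IsCappedDistinctParts n c (glaisherMerge M)
    refine ⟨hc, hc3, fun s hs ↦ ⟨?_, forall_mem_glaisherMerge_lt_iff.2 hcap s hs⟩, ?_⟩
    · have h0 : 0 ∉ glaisherMerge M := zero_notMem_glaisherMerge fun h ↦ by simpa using hM 0 h
      have h1 : 1 ∉ glaisherMerge M := by
        rwa [one_mem_glaisherMerge_iff, Nat.not_odd_iff_even]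
      have := ne_of_mem_of_not_mem hs h0
      have := ne_of_mem_of_not_mem hs h1
      omega
    · simpa [sum_glaisherMerge hM] using hsum
  · rintro ⟨c, S⟩ ⟨hc, hc3, hS, hsum⟩
    have hS' := glaisherMerge_glaisherSplit S
    show IsCappedOddParts n c (glaisherSplit S)
    refine ⟨hc, hc3, fun o ↦ odd_of_mem_glaisherSplit fun h ↦ by simpa using hS 0 h, ?_, ?_, ?_⟩
    · rw [← Nat.not_odd_iff_even, ← one_mem_glaisherMerge_iff, hS']
      exact fun h ↦ by simpa using hS 1 h
    · rw [← forall_mem_glaisherMerge_lt_iff, hS']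
      exact fun s hs ↦ (hS s hs).2
    · simpa [sum_glaisherSplit] using hsum

lemma IsOE.exists_eq_cons {n : ℤ} {l : List ℕ} (h : IsOE n l) :
    ∃ b t T, l = (b + 2 * t) :: b :: b :: (T ++ [3]) := by
  obtain ⟨hsort, hlen, hparts, h12, hlast, -⟩ := h
  match l, hlen with
  | q :: b :: c :: T, hlen =>
    have hT : T ≠ [] := by rintro rfl; simp at hlen
    have h3 : T.getLast hT = 3 := by
      rw [← List.getLast_cons (a := c), List.getLast_eq_getElem]
      simpa [List.getD_eq_getElem?_getD] using hlast
    simp only [List.getD_cons_succ, List.getD_cons_zero] at h12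
    obtain ⟨t, ht⟩ : Even (q - b) :=
      Nat.Odd.sub_odd (hparts q (by simp)).1 (hparts b (by simp)).1
    have hbq : b ≤ q := List.rel_of_pairwise_cons hsort (by simp)
    refine ⟨b, t, T.dropLast, ?_⟩
    rw [← h12, ← h3, List.dropLast_append_getLast, show q = b + 2 * t by omega]

lemma forall_mem_replicate_one_add_cap_iff {b t : ℕ} {T : List ℕ} (hT : ∀ x ∈ T, Odd x ∧ 3 ≤ x) :
    (∀ o ∈ Multiset.replicate (2 * t) 1 + (T : Multiset ℕ),
        o * 2 ^ Nat.log 2 ((Multiset.replicate (2 * t) 1 + (T : Multiset ℕ)).count o) < b) ↔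
      (0 < t → 2 * 2 ^ Nat.log 2 t < b) ∧
        (∀ o, Odd o → 5 ≤ o → 0 < T.count o → o * 2 ^ Nat.log 2 (T.count o) < b) ∧
        (0 < T.count 3 → 3 * 2 ^ Nat.log 2 (T.count 3) < b) := by
  rw [Multiset.forall_mem_replicate_add_iff (fun h ↦ by simpa using (hT 1 h).2)
    (fun o k ↦ o * 2 ^ Nat.log 2 k < b)]
  refine and_congr (imp_congr_ctx (by omega) fun ht ↦ ?_) ⟨fun h ↦ ?_, fun ⟨h5, h3⟩ o ho ↦ ?_⟩
  · rw [one_mul, Nat.two_pow_log_two_mul ht.ne']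
  · simp only [Multiset.coe_count, Multiset.mem_coe] at h
    exact ⟨fun o _ _ ho ↦ h o (List.count_pos_iff.1 ho), fun h3 ↦ h 3 (List.count_pos_iff.1 h3)⟩
  · rw [Multiset.mem_coe] at ho
    obtain ⟨hodd, ho3⟩ := hT o ho
    rw [Multiset.coe_count]
    rcases ho3.eq_or_lt with rfl | ho3
    · exact h3 (List.count_pos_iff.2 ho)
    · exact h5 o hodd (by obtain ⟨k, rfl⟩ := hodd; omega) (List.count_pos_iff.2 ho)

lemma sum_oe_cons (b t : ℕ) (T : List ℕ) :
    ((b + 2 * t) :: b :: b :: (T ++ [3])).sum =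
      3 * b + 3 + (Multiset.replicate (2 * t) 1 + (T : Multiset ℕ)).sum := by
  simp only [List.sum_cons, List.sum_append, List.sum_nil, Multiset.sum_add,
    Multiset.sum_replicate, smul_eq_mul, mul_one, Multiset.sum_coe]
  ring

lemma IsOE.isCappedOddParts {n : ℤ} {b t : ℕ} {T : List ℕ}
    (h : IsOE n ((b + 2 * t) :: b :: b :: (T ++ [3]))) :
    T.Pairwise (· ≥ ·) ∧ (∀ x ∈ T, 3 ≤ x) ∧
      IsCappedOddParts n b (Multiset.replicate (2 * t) 1 + (T : Multiset ℕ)) := by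
  obtain ⟨hsort, -, hparts, -, -, -, hcap₁, hcap₂, hcap₃, hn⟩ := h
  simp only [List.getD_cons_zero, List.getD_cons_succ, List.drop_succ_cons, List.drop_zero,
    List.dropLast_concat, add_tsub_cancel_left, Nat.mul_div_cancel_left t two_pos]
    at hcap₁ hcap₂ hcap₃
  have hT : ∀ x ∈ T, Odd x ∧ 3 ≤ x := fun x hx ↦ hparts x (by simp [hx])
  have h1 : (1 : ℕ) ∉ T := fun h ↦ by simpa using (hT 1 h).2
  have hcount : ∀ o, 5 ≤ o → (T ++ [3]).count o = T.count o := fun o ho ↦ by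
    simp [List.count_append, show 3 ≠ o by omega]
  obtain ⟨hb, hb3⟩ := hparts b (by simp)
  refine ⟨hsort.sublist (((List.sublist_append_left T [3]).cons _).cons _ |>.cons _),
    fun x hx ↦ (hT x hx).2, hb, hb3, ?_, by simp [List.count_eq_zero.2 h1],
    (forall_mem_replicate_one_add_cap_iff hT).2
      ⟨fun ht ↦ ?_, fun o hodd h5 ho ↦ ?_, fun h3 ↦ ?_⟩, ?_⟩
  · intro o ho
    rcases Multiset.mem_add.1 ho with ho | ho
    · rw [Multiset.eq_of_mem_replicate ho]
      exact odd_one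
    · exact (hT o ho).1
  · have := hcap₁ ht; omega
  · have := hcap₂ o hodd h5 (by rwa [hcount o h5]); rw [hcount o h5] at this; omega
  · have := hcap₃ h3; omega
  · rw [← hn, sum_oe_cons]

lemma pairwise_ge_cons_append {q b : ℕ} {T : List ℕ} (hbq : b ≤ q) (hsort : T.Pairwise (· ≥ ·))
    (hT : ∀ x ∈ T, 3 ≤ x ∧ x ≤ b) (hb3 : 3 ≤ b) :
    (q :: b :: b :: (T ++ [3])).Pairwise (· ≥ ·) := by
  simp only [ge_iff_le, List.pairwise_cons, List.mem_cons, List.mem_append, List.not_mem_nil,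
    or_false, or_self_left, or_imp, forall_and, forall_eq, Std.le_refl, true_and,
    List.pairwise_append, hsort, IsEmpty.forall_iff, implies_true, List.Pairwise.nil, and_self,
    and_self_left]
  exact ⟨⟨hbq, fun x hx ↦ (hT x hx).2.trans hbq, hb3.trans hbq⟩, ⟨fun x hx ↦ (hT x hx).2, hb3⟩,
    fun x hx ↦ (hT x hx).1⟩

lemma isOE_of_isCappedOddParts {n : ℤ} {b t : ℕ} {T : List ℕ} (hsort : T.Pairwise (· ≥ ·))
    (hT3 : ∀ x ∈ T, 3 ≤ x)
    (hd : IsCappedOddParts n b (Multiset.replicate (2 * t) 1 + (T : Multiset ℕ))) :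
    IsOE n ((b + 2 * t) :: b :: b :: (T ++ [3])) := by
  obtain ⟨hb, hb3, hodd, -, hcaps, hn⟩ := hd
  have hT : ∀ x ∈ T, Odd x ∧ 3 ≤ x := fun x hx ↦
    ⟨hodd x (Multiset.mem_add.2 (Or.inr (by simpa))), hT3 x hx⟩
  obtain ⟨hcap₁, hcap₅, hcap₃⟩ := (forall_mem_replicate_one_add_cap_iff hT).1 hcaps
  have hTb : ∀ x ∈ T, x < b := fun x hx ↦
    (Nat.le_mul_of_pos_right x (Nat.two_pow_pos _)).trans_lt
      (hcaps x (Multiset.mem_add.2 (Or.inr (by simpa))))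
  simp only [IsOE, List.getD_cons_zero, List.getD_cons_succ, List.drop_succ_cons, List.drop_zero,
    List.dropLast_concat, add_tsub_cancel_left, Nat.mul_div_cancel_left t two_pos]
  refine ⟨?_, by simp, fun x hx ↦ ?_, trivial, by simp [List.getD_eq_getElem?_getD], ?_,
    fun ht ↦ ?_, fun o hodd h5 ho ↦ ?_, fun h3 ↦ ?_, ?_⟩
  · exact pairwise_ge_cons_append (Nat.le_add_right b _) hsort
      (fun x hx ↦ ⟨hT3 x hx, (hTb x hx).le⟩) hb3
  · simp only [List.mem_cons, List.mem_append, List.not_mem_nil, or_false] at hx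
    rcases hx with rfl | rfl | rfl | hx | rfl
    exacts [⟨hb.add_even (even_two_mul t), by omega⟩, ⟨hb, hb3⟩, ⟨hb, hb3⟩, hT x hx,
      ⟨by decide, le_rfl⟩]
  · cases T with
    | nil => show 3 < b ∨ b = 3 ∧ b = 3 ∧ 3 = 3; omega
    | cons x T => simpa using Or.inl (hTb x (by simp))
  · have := hcap₁ ht; omega
  · have hcount : (T ++ [3]).count o = T.count o := by
      simp [List.count_append, show 3 ≠ o by omega]
    rw [hcount] at ho ⊢
    have := hcap₅ o hodd h5 ho
    omega
  · have := hcap₃ h3; omega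
  · rwa [sum_oe_cons]

def oeData (l : List ℕ) : ℕ × Multiset ℕ :=
  (l.getD 1 0, Multiset.replicate (l.getD 0 0 - l.getD 1 0) 1 + ((l.drop 3).dropLast : Multiset ℕ))

noncomputable def oeList (d : ℕ × Multiset ℕ) : List ℕ :=
  (d.1 + d.2.count 1) :: d.1 :: d.1 :: ((d.2.filter (· ≠ 1)).sort (· ≥ ·) ++ [3])

lemma oeData_oeList (d : ℕ × Multiset ℕ) : oeData (oeList d) = d := by
  simp [oeData, oeList, Multiset.replicate_count_add_filter_ne]

lemma bijOn_oeData (n : ℤ) :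
    Set.BijOn oeData {l | IsOE n l} {d | IsCappedOddParts n d.1 d.2} := by
  refine Set.InvOn.bijOn (f' := oeList) ⟨?_, fun d _ ↦ oeData_oeList d⟩ ?_ ?_
  · intro l hl
    obtain ⟨b, t, T, rfl⟩ := hl.exists_eq_cons
    obtain ⟨hsort, hT3, -⟩ := hl.isCappedOddParts
    have h1 : (1 : ℕ) ∉ T := fun h ↦ by simpa using hT3 1 h
    have hfilter :
        (Multiset.replicate (2 * t) 1 + (T : Multiset ℕ)).filter (· ≠ 1) = (T : Multiset ℕ) := by
      rw [Multiset.filter_add, Multiset.filter_eq_nil.2 fun x hx ↦ by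
          simp [Multiset.eq_of_mem_replicate hx], zero_add,
        Multiset.filter_eq_self.2 fun x hx ↦ ne_of_mem_of_not_mem hx (by simpa using h1)]
    simp [oeData, oeList, hfilter, List.count_eq_zero.2 h1, Multiset.coe_sort,
      List.mergeSort_eq_self _ hsort]
  · intro l hl
    obtain ⟨b, t, T, rfl⟩ := hl.exists_eq_cons
    simpa [oeData] using hl.isCappedOddParts.2.2
  · rintro ⟨c, M⟩ hd
    have ⟨_, _, hodd, heven, _⟩ := hd
    obtain ⟨t, ht⟩ := even_iff_exists_two_mul.1 heven
    set L := (M.filter (· ≠ 1)).sort (· ≥ ·)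
    have hM : Multiset.replicate (2 * t) 1 + (L : Multiset ℕ) = M := by
      rw [Multiset.sort_eq, ← ht, Multiset.replicate_count_add_filter_ne]
    have hL3 : ∀ x ∈ L, 3 ≤ x := by
      intro x hx
      rw [Multiset.mem_sort, Multiset.mem_filter] at hx
      obtain ⟨k, rfl⟩ := hodd x hx.1
      omega
    show IsOE n ((c + M.count 1) :: c :: c :: (L ++ [3]))
    rw [ht]
    exact isOE_of_isCappedOddParts (Multiset.pairwise_sort _ _) hL3 (hM ▸ hd)

lemma IsButterfly.exists_eq_cons {n : ℤ} {l : List ℕ} (h : IsButterfly n l) :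
    ∃ c T, l = (c + 2) :: (c + 1) :: c :: T := by
  obtain ⟨-, hlen, h01, h02, -⟩ := h
  match l, hlen with
  | a :: b :: c :: T, _ =>
    simp only [List.getD_cons_zero, List.getD_cons_succ] at h01 h02
    exact ⟨c, T, by rw [h02, show b = c + 1 by omega]⟩

lemma isButterfly_cons_iff {n : ℤ} {c : ℕ} {T : List ℕ} :
    IsButterfly n ((c + 2) :: (c + 1) :: c :: T) ↔
      2 ≤ c ∧ T.Pairwise (· > ·) ∧ (∀ x ∈ T, 2 ≤ x ∧ x < c) ∧
        ((3 * c + 3 + T.sum : ℕ) : ℤ) = n := by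
  simp only [IsButterfly, List.pairwise_cons, List.mem_cons, forall_eq_or_imp, List.length_cons,
    List.getD_cons_zero, List.getD_cons_succ, List.sum_cons]
  rw [show c + 2 + (c + 1 + (c + T.sum)) = 3 * c + 3 + T.sum by ring]
  constructor
  · rintro ⟨⟨-, -, hTc, hT⟩, -, -, -, ⟨-, -, hc, hT2⟩, hsum⟩
    exact ⟨hc, hT, fun x hx ↦ ⟨hT2 x hx, hTc x hx⟩, hsum⟩
  · rintro ⟨hc, hT, hTc, hsum⟩
    have hlt : ∀ x ∈ T, x < c := fun x hx ↦ (hTc x hx).2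
    refine ⟨⟨⟨by omega, by omega, fun x hx ↦ ?_⟩, ⟨by omega, fun x hx ↦ ?_⟩, hlt, hT⟩, by omega,
      trivial, trivial, ⟨by omega, by omega, hc, fun x hx ↦ (hTc x hx).1⟩, hsum⟩ <;>
    · have := hlt x hx; omega

def butterflyData (l : List ℕ) : ℕ × Finset ℕ := (l.getD 2 0, (l.drop 3).toFinset)

def butterflyList (d : ℕ × Finset ℕ) : List ℕ := (d.1 + 2) :: (d.1 + 1) :: d.1 :: d.2.sort (· ≥ ·)

lemma bijOn_butterflyData (n : ℤ) :
    Set.BijOn butterflyData {l | IsButterfly n l ∧ Even (l.getD 1 0)}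
      {d | IsCappedDistinctParts n d.1 d.2} := by
  refine Set.InvOn.bijOn (f' := butterflyList) ⟨?_, ?_⟩ ?_ ?_
  · rintro l ⟨hl, -⟩
    obtain ⟨c, T, rfl⟩ := hl.exists_eq_cons
    have hT := (isButterfly_cons_iff.1 hl).2.1
    simp [butterflyData, butterflyList, List.toFinset_sort _ hT.nodup, hT.imp le_of_lt]
  · rintro ⟨c, S⟩ -
    simp [butterflyData, butterflyList]
  · rintro l ⟨hl, heven⟩
    obtain ⟨c, T, rfl⟩ := hl.exists_eq_cons
    obtain ⟨hc, hT, hTc, hsum⟩ := isButterfly_cons_iff.1 hl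
    have hodd : Odd c := by simpa [Nat.even_add_one] using heven
    show IsCappedDistinctParts n c T.toFinset
    refine ⟨hodd, by obtain ⟨k, rfl⟩ := hodd; omega, by simpa using hTc, ?_⟩
    simpa [butterflyData, List.sum_toFinset _ hT.nodup] using hsum
  · rintro ⟨c, S⟩ ⟨hc, hc3, hS, hsum⟩
    refine ⟨isButterfly_cons_iff.2
      ⟨by omega, (sortedGT_sort S).pairwise, by simpa using hS, ?_⟩, ?_⟩
    · rwa [Finset.sum_sort]
    · simpa [butterflyList, Nat.even_add_one] using hc

theorem oE_eq_sE_general (n : ℤ) :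
    (Nat.card {l : List ℕ // IsOE n l} : ℤ) = sE n := by
  have e₁ := ((bijOn_glaisherMerge n).comp (bijOn_oeData n)).equiv _
  have e₂ := (bijOn_butterflyData n).equiv _
  exact congrArg Nat.cast (Nat.card_congr (e₁.trans e₂.symm))

theorem oE_eq_sE (n : ℤ) (hn : 6 ≤ n) :
    (Nat.card {l : List ℕ // IsOE n l} : ℤ) = sE n :=
  oE_eq_sE_general n
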